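/- arXiv:1407.2444 — 7 statements merged into one kernel-verified Lean document; each statement's English description precedes it below -/
import Mathlib

section
/- Let p > 1 and let (σ_k)_{k≥0} be a sequence with σ_0 = 1 and θ ≤ σ_{k+1}/σ_k ≤ θ^α for all k, where 1 < α < p and θ > 1. Let f:[0,∞)→[0,∞) be non-decreasing and F(s) = sup_{1≤t≤s} f(t)/t. Then ∫_1^∞ s^{-p} F(s) ds ≥ (θ^{-α} − θ^{-p})/(p−1) · Σ_{k=0}^∞ σ_k^{-p} f(σ_k). -/
/-!
Cut `[1, ∞)` at the points `σ k`. On `(σ k, σ (k+1)]` monotonicity gives `F s ≥ f (σ k) / σ k`,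
and since `σ (k+1) ≥ θ σ k` the weight `s ^ (-p)` has mass at least
`(1 - θ ^ (1 - p)) / (p - 1) * σ k ^ (1 - p)` there. Summing over `k` yields the inequality with
the constant `(1 - θ ^ (1 - p)) / (p - 1)`, which dominates `(θ ^ (-α) - θ ^ (-p)) / (p - 1)`
as soon as `α ≥ 1`.
-/

open MeasureTheory Real Set

lemma rpow_neg_sub_rpow_neg_le {θ α p : ℝ} (hθ : 1 ≤ θ) (hα : 1 ≤ α) (hp : 1 ≤ p) :
    θ ^ (-α) - θ ^ (-p) ≤ 1 - θ ^ (1 - p) := by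
  have hθ0 : 0 < θ := by linarith
  have hα' : θ ^ (-α) ≤ θ ^ (-1 : ℝ) := rpow_le_rpow_of_exponent_le hθ (by linarith)
  have hinv : θ ^ (-1 : ℝ) ≤ 1 := rpow_le_one_of_one_le_of_nonpos hθ (by norm_num)
  have hgap : θ ^ (1 - p) ≤ 1 := rpow_le_one_of_one_le_of_nonpos hθ (by linarith)
  have hsplit : θ ^ (-p) = θ ^ (-1 : ℝ) * θ ^ (1 - p) := by
    rw [← rpow_add hθ0]; ring_nf
  nlinarith

lemma mul_rpow_one_sub_le_integral_rpow_neg {θ p a b : ℝ} (hθ : 1 ≤ θ) (hp : 1 < p)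
    (ha : 0 < a) (hab : θ * a ≤ b) :
    (1 - θ ^ (1 - p)) / (p - 1) * a ^ (1 - p) ≤ ∫ s in a..b, s ^ (-p) := by
  have hb : 0 < b := by nlinarith
  have hzero : (0 : ℝ) ∉ uIcc a b := by
    rw [uIcc_of_le (by nlinarith)]; exact fun h => h.1.not_gt ha
  rw [integral_rpow (Or.inr ⟨by linarith, hzero⟩)]
  have hb_rpow : b ^ (1 - p) ≤ θ ^ (1 - p) * a ^ (1 - p) := by
    rw [← mul_rpow (by linarith) ha.le]
    exact rpow_le_rpow_of_nonpos (by positivity) hab (by linarith)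
  rw [show -p + 1 = 1 - p by ring, div_mul_eq_mul_div,
    show (b ^ (1 - p) - a ^ (1 - p)) / (1 - p) = (a ^ (1 - p) - b ^ (1 - p)) / (p - 1) by
      rw [div_eq_div_iff (by linarith) (by linarith)]; ring]
  gcongr
  linarith

lemma div_le_sSup_image_div {f : ℝ → ℝ} (hf_nonneg : ∀ s, 0 ≤ s → 0 ≤ f s)
    (hf_mono : MonotoneOn f (Ici 0)) {a s : ℝ} (ha : 1 ≤ a) (has : a ≤ s) :
    f a / a ≤ sSup ((fun t => f t / t) '' Icc 1 s) := by
  refine le_csSup ⟨f s, ?_⟩ ⟨a, ⟨ha, has⟩, rfl⟩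
  rintro _ ⟨t, ⟨ht, hts⟩, rfl⟩
  have ht0 : (0 : ℝ) ≤ t := by linarith
  calc f t / t ≤ f t := div_le_self (hf_nonneg t ht0) ht
    _ ≤ f s := hf_mono ht0 (by simp only [mem_Ici]; linarith) hts

lemma ofReal_le_setLIntegral_Ioc_rpow_neg_mul {θ p a b : ℝ} (hθ : 1 ≤ θ) (hp : 1 < p)
    (ha : 1 ≤ a) (hab : θ * a ≤ b) {f F : ℝ → ℝ} (hf_nonneg : ∀ s, 0 ≤ s → 0 ≤ f s)
    (hf_mono : MonotoneOn f (Ici 0)) (hF : ∀ s, F s = sSup ((fun t => f t / t) '' Icc 1 s)) :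
    ENNReal.ofReal ((1 - θ ^ (1 - p)) / (p - 1) * (a ^ (-p) * f a)) ≤
      ∫⁻ s in Ioc a b, ENNReal.ofReal (s ^ (-p) * F s) := by
  have ha0 : 0 < a := by linarith
  have hfa : 0 ≤ f a / a := div_nonneg (hf_nonneg a ha0.le) ha0.le
  have hpow : a ^ (-p) * f a = a ^ (1 - p) * (f a / a) := by
    rw [sub_eq_add_neg, add_comm, rpow_add ha0, rpow_one]; field_simp
  have hcont : ContinuousOn (fun s : ℝ => s ^ (-p)) (Icc a b) :=
    continuousOn_id.rpow_const fun x hx => Or.inl (ha0.trans_le hx.1).ne'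
  have hint : IntegrableOn (fun s : ℝ => s ^ (-p) * (f a / a)) (Ioc a b) :=
    (hcont.integrableOn_Icc.mono_set Ioc_subset_Icc_self).mul_const _
  have hnonneg : 0 ≤ᵐ[volume.restrict (Ioc a b)] fun s : ℝ => s ^ (-p) * (f a / a) :=
    ae_restrict_of_forall_mem measurableSet_Ioc fun s hs =>
      mul_nonneg (rpow_nonneg (ha0.trans hs.1).le _) hfa
  calc ENNReal.ofReal ((1 - θ ^ (1 - p)) / (p - 1) * (a ^ (-p) * f a))
      ≤ ENNReal.ofReal ((∫ s in a..b, s ^ (-p)) * (f a / a)) := by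
        rw [hpow, ← mul_assoc]
        gcongr
        exact mul_rpow_one_sub_le_integral_rpow_neg hθ hp ha0 hab
    _ = ∫⁻ s in Ioc a b, ENNReal.ofReal (s ^ (-p) * (f a / a)) := by
        rw [← ofReal_integral_eq_lintegral_ofReal hint hnonneg, integral_mul_const,
          intervalIntegral.integral_of_le (by nlinarith)]
    _ ≤ ∫⁻ s in Ioc a b, ENNReal.ofReal (s ^ (-p) * F s) := by
        refine setLIntegral_mono' measurableSet_Ioc fun s hs => ?_
        rw [hF s]
        gcongr
        · exact rpow_nonneg (ha0.trans hs.1).le _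
        · exact div_le_sSup_image_div hf_nonneg hf_mono ha hs.1.le

lemma tsum_setLIntegral_Ioc_le_setLIntegral_Ioi {σ : ℕ → ℝ} (hσ : Monotone σ) (g : ℝ → ENNReal) :
    ∑' k, ∫⁻ s in Ioc (σ k) (σ (k + 1)), g s ≤ ∫⁻ s in Ioi (σ 0), g s := by
  have hdisj : Pairwise (Function.onFun Disjoint fun k => Ioc (σ k) (σ (k + 1))) :=
    hσ.pairwise_disjoint_on_Ioc_succ
  rw [← lintegral_iUnion (fun _ => measurableSet_Ioc) hdisj]
  refine lintegral_mono_set (iUnion_subset fun k s hs => ?_)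
  exact (hσ (Nat.zero_le k)).trans_lt hs.1

lemma one_le_of_forall_le_div {θ : ℝ} (hθ : 1 ≤ θ) {σ : ℕ → ℝ} (hσ0 : σ 0 = 1)
    (hσ : ∀ k, θ ≤ σ (k + 1) / σ k) (k : ℕ) : 1 ≤ σ k := by
  induction k with
  | zero => exact hσ0.ge
  | succ k ih =>
    have := (le_div_iff₀ (by linarith)).mp (hσ k)
    nlinarith

theorem stmt2_general (p θ α : ℝ) (hp : 1 < p) (hθ : 1 < θ) (hα : 1 < α)
    (σ : ℕ → ℝ) (hσ0 : σ 0 = 1)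
    (hσlow : ∀ k, θ ≤ σ (k + 1) / σ k)
    (f : ℝ → ℝ) (hf_nonneg : ∀ s, 0 ≤ s → 0 ≤ f s)
    (hf_mono : ∀ s t, 0 ≤ s → s ≤ t → f s ≤ f t)
    (F : ℝ → ℝ) (hF : ∀ s, F s = sSup ((fun t => f t / t) '' Set.Icc 1 s)) :
    ENNReal.ofReal ((θ ^ (-α) - θ ^ (-p)) / (p - 1)) *
        ∑' k : ℕ, ENNReal.ofReal ((σ k) ^ (-p) * f (σ k))
      ≤ ∫⁻ s in Set.Ici (1:ℝ), ENNReal.ofReal (s ^ (-p) * F s) := by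
  set c := (1 - θ ^ (1 - p)) / (p - 1)
  have hc : 0 ≤ c := div_nonneg (sub_nonneg.2 (rpow_le_one_of_one_le_of_nonpos hθ.le
    (by linarith))) (by linarith)
  have hσ1 := one_le_of_forall_le_div hθ.le hσ0 hσlow
  have hσstep (k : ℕ) : θ * σ k ≤ σ (k + 1) :=
    (le_div_iff₀ (by linarith [hσ1 k])).mp (hσlow k)
  have hσmono : Monotone σ := monotone_nat_of_le_succ fun k => by nlinarith [hσstep k, hσ1 k]
  calc ENNReal.ofReal ((θ ^ (-α) - θ ^ (-p)) / (p - 1)) *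
        ∑' k : ℕ, ENNReal.ofReal ((σ k) ^ (-p) * f (σ k))
      ≤ ENNReal.ofReal c * ∑' k : ℕ, ENNReal.ofReal ((σ k) ^ (-p) * f (σ k)) := by
        gcongr
        exact div_le_div_of_nonneg_right (rpow_neg_sub_rpow_neg_le hθ.le hα.le hp.le)
          (by linarith)
    _ = ∑' k : ℕ, ENNReal.ofReal (c * ((σ k) ^ (-p) * f (σ k))) := by
        simp only [← ENNReal.tsum_mul_left, ENNReal.ofReal_mul hc]
    _ ≤ ∑' k : ℕ, ∫⁻ s in Ioc (σ k) (σ (k + 1)), ENNReal.ofReal (s ^ (-p) * F s) :=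
        ENNReal.tsum_le_tsum fun k => ofReal_le_setLIntegral_Ioc_rpow_neg_mul hθ.le hp (hσ1 k)
          (hσstep k) hf_nonneg (fun s hs t _ hst => hf_mono s t hs hst) hF
    _ ≤ ∫⁻ s in Ioi (σ 0), ENNReal.ofReal (s ^ (-p) * F s) :=
        tsum_setLIntegral_Ioc_le_setLIntegral_Ioi hσmono _
    _ ≤ ∫⁻ s in Ici (1 : ℝ), ENNReal.ofReal (s ^ (-p) * F s) :=
        lintegral_mono_set (hσ0 ▸ Ioi_subset_Ici_self)

/-- If `σ 0 = 1`, `θ ≤ σ (k+1) / σ k ≤ θ^α` with `1 < α < p`,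
`θ > 1`, and `f : [0,∞) → [0,∞)` is non-decreasing with
`F s = sup_{1 ≤ t ≤ s} f t / t`, then
`∫_1^∞ s^{-p} F s ds ≥ (θ^{-α} - θ^{-p})/(p-1) * ∑ₖ (σ k)^{-p} f (σ k)`. -/
theorem stmt2 (p θ α : ℝ) (hp : 1 < p) (hθ : 1 < θ) (hα : 1 < α) (hαp : α < p)
    (σ : ℕ → ℝ) (hσ0 : σ 0 = 1) (hσpos : ∀ k, 0 < σ k)
    (hσlow : ∀ k, θ ≤ σ (k + 1) / σ k) (hσhigh : ∀ k, σ (k + 1) / σ k ≤ θ ^ α)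
    (f : ℝ → ℝ) (hf_nonneg : ∀ s, 0 ≤ s → 0 ≤ f s)
    (hf_mono : ∀ s t, 0 ≤ s → s ≤ t → f s ≤ f t)
    (F : ℝ → ℝ) (hF : ∀ s, F s = sSup ((fun t => f t / t) '' Set.Icc 1 s)) :
    ENNReal.ofReal ((θ ^ (-α) - θ ^ (-p)) / (p - 1)) *
        ∑' k : ℕ, ENNReal.ofReal ((σ k) ^ (-p) * f (σ k))
      ≤ ∫⁻ s in Set.Ici (1:ℝ), ENNReal.ofReal (s ^ (-p) * F s) :=
  stmt2_general p θ α hp hθ hα σ hσ0 hσlow f hf_nonneg hf_mono F hF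
end

section
/- Let f:[0,∞)→[0,∞) be non-decreasing and p > 1. If there exists a sequence (s_k) with s_{k+1} ≥ θ s_k for some θ > 1, s_1 ≥ 1, and Σ_k s_k^{-p} f(s_k) = ∞, then ∫_1^∞ s^{-p} F(s) ds = ∞, where F(s) = sup_{1≤t≤s} f(t)/t. -/
/-!
The intervals `[s_k, θ s_k)` are pairwise disjoint and have length `(θ - 1) s_k`. On such an
interval `t^{-p} ≥ (θ s_k)^{-p}` and `F(t) ≥ f(s_k)/s_k`, so the integral of `t^{-p} F(t)` over it
is at least `θ^{-p} (θ - 1) s_k^{-p} f(s_k)`. Summing over `k` bounds the integral over `[1, ∞)`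
from below by a positive multiple of the divergent series.
-/

open MeasureTheory Set Function

open scoped ENNReal

lemma setLIntegral_eq_top_of_tsum_eq_top {α : Type*} [MeasurableSpace α] {μ : Measure α}
    {g : α → ℝ≥0∞} {S : Set α} {T : ℕ → Set α} (hTm : ∀ k, MeasurableSet (T k))
    (hdisj : Pairwise (Disjoint on T)) (hTS : ∀ k, T k ⊆ S) {u : ℕ → ℝ≥0∞}
    (hu : ∑' k, u k = ⊤) {C : ℝ≥0∞} (hC : C ≠ 0) (hle : ∀ k, C * u k ≤ ∫⁻ x in T k, g x ∂μ) :
    ∫⁻ x in S, g x ∂μ = ⊤ := by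
  refine top_le_iff.mp ?_
  calc ⊤ = C * ∑' k, u k := by rw [hu, ENNReal.mul_top hC]
    _ = ∑' k, C * u k := ENNReal.tsum_mul_left.symm
    _ ≤ ∑' k, ∫⁻ x in T k, g x ∂μ := ENNReal.tsum_le_tsum hle
    _ = ∫⁻ x in ⋃ k, T k, g x ∂μ := (lintegral_iUnion hTm hdisj g).symm
    _ ≤ ∫⁻ x in S, g x ∂μ := lintegral_mono_set (iUnion_subset hTS)

section GeometricGrowth

variable {θ : ℝ} {t : ℕ → ℝ}

lemma one_le_of_mul_le_succ (hθ : 1 ≤ θ) (h0 : 1 ≤ t 0) (hgrow : ∀ k, θ * t k ≤ t (k + 1))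
    (k : ℕ) : 1 ≤ t k := by
  induction k with
  | zero => exact h0
  | succ n ih => nlinarith [hgrow n]

lemma pairwise_disjoint_Ico_mul_of_mul_le_succ (hθ : 1 ≤ θ) (h0 : 1 ≤ t 0)
    (hgrow : ∀ k, θ * t k ≤ t (k + 1)) :
    Pairwise (Disjoint on fun k => Ico (t k) (θ * t k)) := by
  have hmono : Monotone t := monotone_nat_of_le_succ fun k => by
    nlinarith [hgrow k, one_le_of_mul_le_succ hθ h0 hgrow k]
  intro i j hij
  exact (hmono.pairwise_disjoint_on_Ico_succ hij).mono
    (Ico_subset_Ico_right (hgrow i)) (Ico_subset_Ico_right (hgrow j))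

end GeometricGrowth

section RunningSupremum

variable {f : ℝ → ℝ} (hf_nonneg : ∀ s, 0 ≤ s → 0 ≤ f s)
  (hf_mono : ∀ s t, 0 ≤ s → s ≤ t → f s ≤ f t)

include hf_nonneg hf_mono in
lemma bddAbove_image_div_Icc_one (t : ℝ) : BddAbove ((fun u => f u / u) '' Icc 1 t) := by
  refine ⟨f t, ?_⟩
  rintro x ⟨u, ⟨hu1, hut⟩, rfl⟩
  have hu0 : 0 ≤ u := zero_le_one.trans hu1
  calc f u / u ≤ f u := div_le_self (hf_nonneg u hu0) hu1
    _ ≤ f t := hf_mono u t hu0 hut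

include hf_nonneg hf_mono in
lemma div_le_sSup_image_div_Icc_one {a t : ℝ} (ha : 1 ≤ a) (hat : a ≤ t) :
    f a / a ≤ sSup ((fun u => f u / u) '' Icc 1 t) :=
  le_csSup (bddAbove_image_div_Icc_one hf_nonneg hf_mono t) ⟨a, ⟨ha, hat⟩, rfl⟩

end RunningSupremum

lemma ofReal_le_setLIntegral_Ico_rpow_mul {p θ a c : ℝ} {g : ℝ → ℝ} (hp : 0 ≤ p) (hθ : 1 ≤ θ)
    (ha : 0 < a) (hc : 0 ≤ c) (hg : ∀ t ∈ Ico a (θ * a), c ≤ g t) :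
    ENNReal.ofReal ((θ * a) ^ (-p) * c * ((θ - 1) * a)) ≤
      ∫⁻ t in Ico a (θ * a), ENNReal.ofReal (t ^ (-p) * g t) := by
  have hθa : 0 < θ * a := by positivity
  calc ENNReal.ofReal ((θ * a) ^ (-p) * c * ((θ - 1) * a))
      = ENNReal.ofReal ((θ * a) ^ (-p) * c) * volume (Ico a (θ * a)) := by
        rw [Real.volume_Ico, ← ENNReal.ofReal_mul (by positivity)]
        ring_nf
    _ = ∫⁻ _ in Ico a (θ * a), ENNReal.ofReal ((θ * a) ^ (-p) * c) := (setLIntegral_const _ _).symm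
    _ ≤ ∫⁻ t in Ico a (θ * a), ENNReal.ofReal (t ^ (-p) * g t) := by
      refine setLIntegral_mono' measurableSet_Ico fun t ht => ENNReal.ofReal_le_ofReal ?_
      have ht0 : 0 < t := ha.trans_le ht.1
      exact mul_le_mul (Real.rpow_le_rpow_of_nonpos ht0 ht.2.le (neg_nonpos.mpr hp)) (hg t ht) hc
        (by positivity)

/-- Lemma 4.2, (i) ⟹ (ii). If `f : [0,∞) → [0,∞)` is
non-decreasing, `p > 1`, and there is a sequence `s_k` with `s_{k+1} ≥ θ s_k`
(`θ > 1`), `s_1 ≥ 1`, and `∑ₖ s_k^{-p} f(s_k) = ∞`, then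
`∫_1^∞ s^{-p} F(s) ds = ∞` where `F(s) = sup_{1 ≤ t ≤ s} f(t)/t`. -/
theorem stmt3 (p : ℝ) (hp : 1 < p)
    (f : ℝ → ℝ) (hf_nonneg : ∀ s, 0 ≤ s → 0 ≤ f s)
    (hf_mono : ∀ s t, 0 ≤ s → s ≤ t → f s ≤ f t)
    (θ : ℝ) (hθ : 1 < θ) (s : ℕ → ℝ) (hs1 : 1 ≤ s 1)
    (hsgrow : ∀ k : ℕ, θ * s k ≤ s (k + 1))
    (hdiv : ∑' k : ℕ, ENNReal.ofReal ((s (k + 1)) ^ (-p) * f (s (k + 1))) = ⊤)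
    (F : ℝ → ℝ) (hF : ∀ t, F t = sSup ((fun u => f u / u) '' Set.Icc 1 t)) :
    ∫⁻ t in Set.Ici (1:ℝ), ENNReal.ofReal (t ^ (-p) * F t) = ⊤ := by
  have hgrow : ∀ k, θ * s (k + 1) ≤ s (k + 1 + 1) := fun k => hsgrow (k + 1)
  have hs_one_le := one_le_of_mul_le_succ hθ.le hs1 hgrow
  have hCpos : 0 < θ ^ (-p) * (θ - 1) :=
    mul_pos (Real.rpow_pos_of_pos (by linarith) _) (by linarith)
  refine setLIntegral_eq_top_of_tsum_eq_top (fun _ => measurableSet_Ico)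
    (pairwise_disjoint_Ico_mul_of_mul_le_succ hθ.le hs1 hgrow)
    (fun k _ ht => (hs_one_le k).trans ht.1) hdiv (ENNReal.ofReal_pos.mpr hCpos).ne' fun k => ?_
  set a := s (k + 1)
  have ha : 0 < a := zero_lt_one.trans_le (hs_one_le k)
  have hfa : 0 ≤ f a := hf_nonneg a ha.le
  calc ENNReal.ofReal (θ ^ (-p) * (θ - 1)) * ENNReal.ofReal (a ^ (-p) * f a)
      = ENNReal.ofReal ((θ * a) ^ (-p) * (f a / a) * ((θ - 1) * a)) := by
        rw [← ENNReal.ofReal_mul hCpos.le, Real.mul_rpow (by linarith) ha.le]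
        field_simp
    _ ≤ _ := ofReal_le_setLIntegral_Ico_rpow_mul (by linarith) hθ.le ha (div_nonneg hfa ha.le)
      fun t ht => (hF t).symm ▸ div_le_sSup_image_div_Icc_one hf_nonneg hf_mono (hs_one_le k) ht.1
end

section
/- Let f:[0,∞)→[0,∞) be non-decreasing, p > 1, and F(s) = sup_{1≤t≤s} f(t)/t. If ∫_1^∞ s^{-p} F(s) ds = ∞, then there exists θ > 1 and a sequence (s_j) with s_{j+1} ≥ θ s_j and Σ_j s_j^{-p} f(s_j) = ∞. -/
open MeasureTheory Set
open scoped ENNReal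

/-!
Take `θ = 2` and `s_j = 2^j`. For `1 ≤ u ≤ t`, choosing `k` with `2^k / 2 ≤ u ≤ 2^k` gives
`f u / u ≤ 2 f(2^k) / 2^k`, so `F t` is dominated by the sum of the constants `2 f(2^k) / 2^k`
over all `k` with `2^k / 2 ≤ t`. Integrating against `t^{-p}` termwise, the `k`-th constant
contributes `∫_{2^k/2}^∞ t^{-p} dt ∝ 2^{k(1-p)}`, so `∫_1^∞ t^{-p} F(t) dt` is at most
`2^p / (p - 1) · ∑ₖ 2^{-kp} f(2^k)`, which is therefore infinite.
-/

lemma lintegral_Ici_rpow_neg {p a : ℝ} (hp : 1 < p) (ha : 0 < a) :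
    ∫⁻ t in Ici a, ENNReal.ofReal (t ^ (-p)) = ENNReal.ofReal (a ^ (1 - p) / (p - 1)) := by
  rw [← restrict_Ioi_eq_restrict_Ici,
    ← ofReal_integral_eq_lintegral_ofReal (integrableOn_Ioi_rpow_of_lt (by linarith) ha),
    integral_Ioi_rpow_of_lt (by linarith) ha]
  · congr 1
    rw [neg_div, ← div_neg]
    ring_nf
  · filter_upwards [ae_restrict_mem measurableSet_Ioi] with t ht
    exact Real.rpow_nonneg (ha.trans ht).le _

lemma setLIntegral_rpow_neg_mul_indicator_Ici_le {p a : ℝ} (hp : 1 < p) (ha : 0 < a)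
    (s : Set ℝ) (c : ℝ≥0∞) :
    ∫⁻ t in s, ENNReal.ofReal (t ^ (-p)) * (Ici a).indicator (fun _ => c) t ≤
      c * ENNReal.ofReal (a ^ (1 - p) / (p - 1)) := by
  calc _ = ∫⁻ t in s, (Ici a).indicator (fun t => ENNReal.ofReal (t ^ (-p)) * c) t := by
        simp only [indicator_mul_right]
    _ ≤ ∫⁻ t, (Ici a).indicator (fun t => ENNReal.ofReal (t ^ (-p)) * c) t :=
        setLIntegral_le_lintegral _ _
    _ = c * ENNReal.ofReal (a ^ (1 - p) / (p - 1)) := by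
        rw [lintegral_indicator measurableSet_Ici, lintegral_mul_const _ (by fun_prop),
          lintegral_Ici_rpow_neg hp ha, mul_comm]

lemma ENNReal.ofReal_sSup_le {S : Set ℝ} {B : ℝ≥0∞} (h : ∀ x ∈ S, ENNReal.ofReal x ≤ B) :
    ENNReal.ofReal (sSup S) ≤ B := by
  rcases eq_or_ne B ⊤ with rfl | hB
  · exact le_top
  rw [ENNReal.ofReal_le_iff_le_toReal hB]
  exact Real.sSup_le (fun x hx => (ENNReal.ofReal_le_iff_le_toReal hB).1 (h x hx))
    ENNReal.toReal_nonneg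

lemma exists_div_le_two_mul_div_two_pow {f : ℝ → ℝ} (hf_nonneg : ∀ s, 0 ≤ s → 0 ≤ f s)
    (hf_mono : ∀ s t, 0 ≤ s → s ≤ t → f s ≤ f t) {u : ℝ} (hu : 1 ≤ u) :
    ∃ k : ℕ, (2 : ℝ) ^ k / 2 ≤ u ∧ f u / u ≤ 2 * (f (2 ^ k) / 2 ^ k) := by
  obtain ⟨n, hnu, hun⟩ := exists_nat_pow_near hu one_lt_two
  have hn : (2 : ℝ) ^ (n + 1) / 2 = 2 ^ n := by rw [pow_succ]; field_simp
  refine ⟨n + 1, hn ▸ hnu, ?_⟩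
  have h2n : (0 : ℝ) < 2 ^ n := by positivity
  calc f u / u ≤ f (2 ^ (n + 1)) / u := by
        gcongr
        exact hf_mono u _ (by linarith) hun.le
    _ ≤ f (2 ^ (n + 1)) / 2 ^ n := by
        gcongr
        exact hf_nonneg _ (by positivity)
    _ = 2 * (f (2 ^ (n + 1)) / 2 ^ (n + 1)) := by rw [pow_succ]; field_simp

lemma ofReal_sSup_div_le_tsum_indicator {f : ℝ → ℝ} (hf_nonneg : ∀ s, 0 ≤ s → 0 ≤ f s)
    (hf_mono : ∀ s t, 0 ≤ s → s ≤ t → f s ≤ f t) (t : ℝ) :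
    ENNReal.ofReal (sSup ((fun u => f u / u) '' Icc 1 t)) ≤
      ∑' k : ℕ, (Ici ((2 : ℝ) ^ k / 2)).indicator
        (fun _ => ENNReal.ofReal (2 * (f (2 ^ k) / 2 ^ k))) t := by
  refine ENNReal.ofReal_sSup_le ?_
  rintro _ ⟨u, ⟨hu1, hut⟩, rfl⟩
  obtain ⟨k, hku, hfu⟩ := exists_div_le_two_mul_div_two_pow hf_nonneg hf_mono hu1
  refine le_trans ?_ (ENNReal.le_tsum k)
  rw [indicator_of_mem (mem_Ici.2 (hku.trans hut))]
  exact ENNReal.ofReal_le_ofReal hfu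

lemma two_mul_div_mul_half_rpow {p x : ℝ} (hx : 0 < x) (y : ℝ) :
    2 * (y / x) * ((x / 2) ^ (1 - p) / (p - 1)) = 2 ^ p / (p - 1) * (x ^ (-p) * y) := by
  rw [Real.div_rpow hx.le zero_le_two, sub_eq_add_neg, Real.rpow_add hx, Real.rpow_one,
    Real.rpow_add two_pos, Real.rpow_one, Real.rpow_neg zero_le_two]
  field_simp

/-- Lemma 4.2, (ii) ⟹ (i). If `f : [0,∞) → [0,∞)` is
non-decreasing, `p > 1`, `F(s) = sup_{1 ≤ t ≤ s} f(t)/t`, and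
`∫_1^∞ s^{-p} F(s) ds = ∞`, then there are `θ > 1` and a sequence `s_j ≥ 1`
with `s_{j+1} ≥ θ s_j` and `∑ⱼ s_j^{-p} f(s_j) = ∞`. -/
theorem stmt4 (p : ℝ) (hp : 1 < p)
    (f : ℝ → ℝ) (hf_nonneg : ∀ s, 0 ≤ s → 0 ≤ f s)
    (hf_mono : ∀ s t, 0 ≤ s → s ≤ t → f s ≤ f t)
    (F : ℝ → ℝ) (hF : ∀ t, F t = sSup ((fun u => f u / u) '' Set.Icc 1 t))
    (hdiv : ∫⁻ t in Set.Ici (1:ℝ), ENNReal.ofReal (t ^ (-p) * F t) = ⊤) :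
    ∃ θ > (1:ℝ), ∃ s : ℕ → ℝ, (∀ j, 1 ≤ s j) ∧ (∀ j, θ * s j ≤ s (j + 1)) ∧
      ∑' j : ℕ, ENNReal.ofReal ((s j) ^ (-p) * f (s j)) = ⊤ := by
  refine ⟨2, one_lt_two, fun j => 2 ^ j, fun j => one_le_pow₀ one_le_two,
    fun j => (pow_succ' 2 j).ge, ?_⟩
  set c : ℕ → ℝ≥0∞ := fun k => ENNReal.ofReal (2 * (f (2 ^ k) / 2 ^ k))
  have hbound : ∫⁻ t in Ici (1 : ℝ), ENNReal.ofReal (t ^ (-p) * F t) ≤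
      ∑' k : ℕ, ENNReal.ofReal (2 ^ p / (p - 1)) * ENNReal.ofReal ((2 ^ k) ^ (-p) * f (2 ^ k)) :=
    calc _ ≤ ∫⁻ t in Ici (1 : ℝ), ∑' k, ENNReal.ofReal (t ^ (-p)) *
            (Ici ((2 : ℝ) ^ k / 2)).indicator (fun _ => c k) t := by
          refine setLIntegral_mono' measurableSet_Ici fun t (ht : 1 ≤ t) => ?_
          rw [ENNReal.ofReal_mul (Real.rpow_nonneg (by linarith) _), ENNReal.tsum_mul_left, hF]
          gcongr
          exact ofReal_sSup_div_le_tsum_indicator hf_nonneg hf_mono t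
      _ = ∑' k, ∫⁻ t in Ici (1 : ℝ), ENNReal.ofReal (t ^ (-p)) *
            (Ici ((2 : ℝ) ^ k / 2)).indicator (fun _ => c k) t :=
          lintegral_tsum fun k => by fun_prop (disch := measurability)
      _ ≤ _ := by
          gcongr with k
          refine (setLIntegral_rpow_neg_mul_indicator_Ici_le hp (by positivity) _ _).trans_eq ?_
          have hfk : 0 ≤ f (2 ^ k) := hf_nonneg _ (by positivity)
          rw [← ENNReal.ofReal_mul (by positivity), two_mul_div_mul_half_rpow (by positivity),
            ENNReal.ofReal_mul (div_nonneg (by positivity) (by linarith))]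
  rw [hdiv, ENNReal.tsum_mul_left, top_le_iff, ENNReal.mul_eq_top] at hbound
  exact hbound.resolve_right (fun h => ENNReal.ofReal_ne_top h.1) |>.2
end

section
/- Let p > 1 and let (t_k) be defined by t_k = (ψ/φ_k)^{2/d} − 1/α², where ψ, α > 0 and (φ_k) is a positive sequence with φ_{k+1} ≥ θ φ_k (θ > 1) and φ_{k+1}/(α^d ψ) ≤ 1/2. Then with d ≥ 1 there exists σ > 0 depending only on d and θ such that ∫_{t_{k+1}}^{t_k} s^{d/2} ds ≥ σ (ψ/φ_k)^{1+2/d} for every such k. -/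
/-!
Write `a = (ψ/φ_k)^{2/d}`, `b = (ψ/φ_{k+1})^{2/d}` and `c = 1/α²`, so that `t_k = a - c` and
`t_{k+1} = b - c`. The growth of `φ` gives `b ≤ θ^{-2/d} a`, and the smallness of `φ_{k+1}` gives
`c ≤ 2^{-2/d} b`. Hence the shift by `c` keeps `t_{k+1} ≤ θ^{-2/d} t_k` and `t_k ≥ (1 - 2^{-2/d}) a`,
so `∫_{t_{k+1}}^{t_k} s^{d/2} ds = (t_k^p - t_{k+1}^p)/p` with `p = d/2 + 1` is at least
`(1 - θ^{-2p/d}) (1 - 2^{-2/d})^p a^p / p`, and `a^p = (ψ/φ_k)^{1+2/d}`.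
-/

open Real intervalIntegral

lemma mul_rpow_le_sub_rpow {x y l p : ℝ} (hy : 0 ≤ y) (hyx : y ≤ l * x) (hl : 0 ≤ l)
    (hx : 0 ≤ x) (hp : 0 ≤ p) : (1 - l ^ p) * x ^ p ≤ x ^ p - y ^ p := by
  have : y ^ p ≤ l ^ p * x ^ p := by
    rw [← mul_rpow hl hx]
    exact rpow_le_rpow hy hyx hp
  linarith

lemma le_integral_rpow_sub_sub {a b c l m r : ℝ} (hr : -1 < r) (ha : 0 ≤ a) (hb : 0 ≤ b)
    (hc : 0 ≤ c) (hcb : c ≤ m * b) (hba : b ≤ l * a) (hl0 : 0 ≤ l) (hl1 : l ≤ 1) (hm0 : 0 ≤ m)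
    (hm1 : m ≤ 1) :
    (1 - l ^ (r + 1)) * (1 - m) ^ (r + 1) * a ^ (r + 1) / (r + 1) ≤
      ∫ s in (b - c)..(a - c), s ^ r := by
  have hp : 0 < r + 1 := by linarith
  have hy : 0 ≤ b - c := by nlinarith
  have hyx : b - c ≤ l * (a - c) := by nlinarith
  have hxa : (1 - m) * a ≤ a - c := by
    nlinarith [mul_le_mul_of_nonneg_left hba hm0, mul_le_mul_of_nonneg_right hl1 ha]
  have hx : 0 ≤ a - c := by nlinarith
  have hpow : (1 - m) ^ (r + 1) * a ^ (r + 1) ≤ (a - c) ^ (r + 1) := by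
    rw [← mul_rpow (by linarith) ha]
    exact rpow_le_rpow (by nlinarith) hxa hp.le
  have hlp : 0 ≤ 1 - l ^ (r + 1) := by linarith [rpow_le_one hl0 hl1 hp.le]
  rw [integral_rpow (Or.inl hr), mul_assoc, div_le_div_iff_of_pos_right hp]
  calc (1 - l ^ (r + 1)) * ((1 - m) ^ (r + 1) * a ^ (r + 1))
      ≤ (1 - l ^ (r + 1)) * (a - c) ^ (r + 1) := mul_le_mul_of_nonneg_left hpow hlp
    _ ≤ (a - c) ^ (r + 1) - (b - c) ^ (r + 1) := mul_rpow_le_sub_rpow hy hyx hl0 hx hp.le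

lemma div_rpow_le_rpow_neg_mul {ψ x y θ q : ℝ} (hψ : 0 ≤ ψ) (hx : 0 < x) (hθ : 0 < θ)
    (hxy : θ * x ≤ y) (hq : 0 ≤ q) : (ψ / y) ^ q ≤ θ ^ (-q) * (ψ / x) ^ q := by
  have hy : 0 < y := lt_of_lt_of_le (mul_pos hθ hx) hxy
  calc (ψ / y) ^ q ≤ (θ⁻¹ * (ψ / x)) ^ q := by
        refine rpow_le_rpow (by positivity) ?_ hq
        rw [inv_mul_eq_div, div_div, mul_comm x]
        exact div_le_div_of_nonneg_left hψ (mul_pos hθ hx) hxy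
    _ = θ ^ (-q) * (ψ / x) ^ q := by
        rw [mul_rpow (by positivity) (by positivity), inv_rpow hθ.le, rpow_neg hθ.le]

lemma one_div_sq_le_of_div_le_half {ψ α φ d : ℝ} (hψ : 0 < ψ) (hα : 0 < α) (hφ : 0 < φ)
    (hd : 0 < d) (h : φ / (α ^ d * ψ) ≤ 1 / 2) :
    1 / α ^ 2 ≤ 2 ^ (-(2 / d)) * (ψ / φ) ^ (2 / d) := by
  have hαd : 0 < α ^ d := rpow_pos_of_pos hα d
  have hle : 2 / α ^ d ≤ ψ / φ := by
    rw [div_le_div_iff₀ hαd hφ]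
    rw [div_le_div_iff₀ (by positivity) two_pos] at h
    linarith
  have hα2 : (α ^ d) ^ (2 / d) = α ^ 2 := by
    rw [← rpow_mul hα.le, mul_div_cancel₀ 2 hd.ne', rpow_two]
  calc 1 / α ^ 2 = 2 ^ (-(2 / d)) * (2 / α ^ d) ^ (2 / d) := by
        rw [div_rpow zero_le_two hαd.le, hα2, ← mul_div_assoc, ← rpow_add two_pos]
        norm_num
    _ ≤ 2 ^ (-(2 / d)) * (ψ / φ) ^ (2 / d) := by gcongr

/-- key integral lower bound from the proof of Theorem 4.1.
With `t_k = (ψ/φ_k)^{2/d} − 1/α²`, `φ_{k+1} ≥ θ φ_k` (`θ > 1`) and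
`φ_{k+1}/(α^d ψ) ≤ 1/2`, there is `σ > 0` depending only on `d` and `θ`
such that `∫_{t_{k+1}}^{t_k} s^{d/2} ds ≥ σ (ψ/φ_k)^{1+2/d}`. -/
theorem stmt8 (d : ℕ) (hd : 1 ≤ d) (θ : ℝ) (hθ : 1 < θ) :
    ∃ σ > (0:ℝ), ∀ (ψ α : ℝ) (φ : ℕ → ℝ) (t : ℕ → ℝ) (k : ℕ),
      0 < ψ → 0 < α → (∀ j, 0 < φ j) →
      θ * φ k ≤ φ (k + 1) →
      φ (k + 1) / (α ^ (d:ℝ) * ψ) ≤ 1 / 2 →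
      (∀ j, t j = (ψ / φ j) ^ (2 / (d:ℝ)) - 1 / α ^ 2) →
      σ * (ψ / φ k) ^ (1 + 2 / (d:ℝ)) ≤
        ∫ s in (t (k + 1))..(t k), s ^ ((d:ℝ) / 2) := by
  have hd0 : (0:ℝ) < d := by positivity
  have hexp : 2 / (d:ℝ) * ((d:ℝ) / 2 + 1) = 1 + 2 / d := by field_simp
  have hθ1 : θ ^ (-(1 + 2 / (d:ℝ))) < 1 := rpow_lt_one_of_one_lt_of_neg hθ (by
    have : 0 < 2 / (d:ℝ) := by positivity
    linarith)
  have h21 : (2:ℝ) ^ (-(2 / (d:ℝ))) < 1 := rpow_lt_one_of_one_lt_of_neg one_lt_two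
    (neg_lt_zero.2 (by positivity))
  refine ⟨(1 - θ ^ (-(1 + 2 / (d:ℝ)))) * (1 - 2 ^ (-(2 / (d:ℝ)))) ^ ((d:ℝ) / 2 + 1) /
    ((d:ℝ) / 2 + 1), div_pos (mul_pos (sub_pos.2 hθ1) (rpow_pos_of_pos (sub_pos.2 h21) _))
      (by positivity), ?_⟩
  intro ψ α φ t k hψ hα hφ hθφ hhalf ht
  have hφk := hφ k
  have hφk1 := hφ (k + 1)
  have hba := div_rpow_le_rpow_neg_mul hψ.le hφk (by linarith) hθφ
    (by positivity : 0 ≤ 2 / (d:ℝ))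
  have hcb := one_div_sq_le_of_div_le_half hψ hα hφk1 hd0 hhalf
  have key := le_integral_rpow_sub_sub (by linarith : (-1:ℝ) < d / 2) (by positivity)
    (by positivity) (by positivity) hcb hba (by positivity)
    (rpow_le_one_of_one_le_of_nonpos hθ.le (neg_nonpos.2 (by positivity))) (by positivity) h21.le
  rw [ht, ht]
  convert key using 2
  rw [← rpow_mul (by linarith), ← rpow_mul (div_pos hψ hφk).le, neg_mul, hexp]
  ring
end

section
/- For every d ≥ 1 there exists a constant c_d ∈ (0,1) such that for all r > 0 and t > 0: (4πt)^{-d/2} ∫_{B(0,r)} e^{-|x−y|²/(4t)} dy ≥ c_d (r/(r+√t))^d for every x ∈ ℝ^d with |x| ≤ r + √t. -/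
/-!
With `s = √t` and `ρ = min r s / 2`, pulling `x` towards the origin gives a ball `B(z, ρ)` inside
`B(0, r)` all of whose points lie within `2s` of `x`. There the Gaussian `e^{-|x-y|²/4t}` is at
least `e⁻¹`, so the integral is at least `e⁻¹ |B(0,1)| ρ^d`, and `r / (r + s) ≤ min r s / s = 2ρ / s`
turns `(4πt)^{-d/2} ρ^d = (4π)^{-d/2} (ρ/s)^d` into the claimed bound.
-/

open MeasureTheory Metric Module

section Geometry

variable {E : Type*} [NormedAddCommGroup E] [NormedSpace ℝ E]

/-- The centre is `x` pulled towards the origin by the factor `(r - ρ) / (r + s)`. -/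
theorem exists_ball_subset_ball_zero_and_ball {r s ρ : ℝ} (hr : 0 < r) (hs : 0 ≤ s) (hρ : 0 ≤ ρ)
    (hρr : ρ ≤ r) {x : E} (hx : ‖x‖ ≤ r + s) :
    ∃ z : E, ball z ρ ⊆ ball 0 r ∧ ball z ρ ⊆ ball x (s + 2 * ρ) := by
  have hrs : 0 < r + s := by positivity
  set lam := (r - ρ) / (r + s)
  have hlam0 : 0 ≤ lam := div_nonneg (by linarith) hrs.le
  have hlam1 : lam ≤ 1 := (div_le_one hrs).2 (by linarith)
  have hz : ‖lam • x‖ ≤ r - ρ := by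
    calc ‖lam • x‖ = lam * ‖x‖ := by rw [norm_smul, Real.norm_of_nonneg hlam0]
      _ ≤ lam * (r + s) := by gcongr
      _ = r - ρ := div_mul_cancel₀ _ hrs.ne'
  have hzx : dist (lam • x) x ≤ s + ρ := by
    calc dist (lam • x) x = (1 - lam) * ‖x‖ := by
          rw [dist_eq_norm, ← norm_neg, show -(lam • x - x) = (1 - lam) • x by module, norm_smul,
            Real.norm_of_nonneg (by linarith)]
      _ ≤ (1 - lam) * (r + s) := by gcongr
      _ = s + ρ := by rw [sub_mul, one_mul, div_mul_cancel₀ _ hrs.ne']; ring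
  refine ⟨lam • x, fun y hy => ?_, fun y hy => ?_⟩ <;> rw [mem_ball] at hy ⊢
  · linarith [dist_triangle y (lam • x) 0, dist_zero_right (lam • x)]
  · linarith [dist_triangle y (lam • x) x]

end Geometry

theorem exp_neg_one_le_exp_neg_sq_div {u t : ℝ} (hu : |u| ≤ 2 * √t) :
    Real.exp (-1) ≤ Real.exp (-(u ^ 2) / (4 * t)) := by
  rw [Real.exp_le_exp, neg_div, neg_le_neg_iff]
  rcases le_or_gt t 0 with ht | ht
  · exact (div_nonpos_of_nonneg_of_nonpos (sq_nonneg u) (by linarith)).trans zero_le_one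
  rw [div_le_one (by positivity)]
  calc u ^ 2 = |u| ^ 2 := (sq_abs u).symm
    _ ≤ (2 * √t) ^ 2 := by gcongr
    _ = 4 * t := by rw [mul_pow, Real.sq_sqrt ht.le]; norm_num

theorem div_add_le_min_div {r s : ℝ} (hr : 0 ≤ r) (hs : 0 < s) : r / (r + s) ≤ min r s / s := by
  rcases le_total r s with h | h
  · rw [min_eq_left h]; gcongr; linarith
  · rw [min_eq_right h, div_self hs.ne', div_le_one (by positivity)]; linarith

theorem mul_rpow_neg_div_two_eq_div_sqrt_pow {a t : ℝ} (ha : 0 ≤ a) (ht : 0 ≤ t) (n : ℕ) :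
    (a * t) ^ (-(n : ℝ) / 2) = a ^ (-(n : ℝ) / 2) / √t ^ n := by
  rw [Real.mul_rpow ha ht, div_eq_mul_inv (a ^ _)]
  congr 1
  rw [Real.sqrt_eq_rpow, ← Real.rpow_natCast, ← Real.rpow_mul ht, ← Real.rpow_neg ht]
  ring_nf

section GaussianIntegral

variable {E : Type*} [NormedAddCommGroup E] [MeasurableSpace E] [OpensMeasurableSpace E]
  (μ : Measure E)

theorem exp_neg_one_mul_measureReal_le_setIntegral {S T : Set E} {x : E} {t : ℝ} (ht : 0 ≤ t)
    (hT : MeasurableSet T) (hTS : T ⊆ S) (hS : μ S ≠ ⊤) (hTx : T ⊆ closedBall x (2 * √t)) :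
    Real.exp (-1) * μ.real T ≤ ∫ y in S, Real.exp (-(‖x - y‖ ^ 2) / (4 * t)) ∂μ := by
  have hcont : Continuous fun y => Real.exp (-(‖x - y‖ ^ 2) / (4 * t)) := by fun_prop
  have hint : IntegrableOn (fun y => Real.exp (-(‖x - y‖ ^ 2) / (4 * t))) S μ := by
    refine Measure.integrableOn_of_bounded (M := 1) hS hcont.aestronglyMeasurable
      (Filter.Eventually.of_forall fun y => ?_)
    rw [Real.norm_of_nonneg (Real.exp_pos _).le, Real.exp_le_one_iff]
    exact div_nonpos_of_nonpos_of_nonneg (neg_nonpos.2 (sq_nonneg _)) (by positivity)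
  calc Real.exp (-1) * μ.real T
      ≤ ∫ y in T, Real.exp (-(‖x - y‖ ^ 2) / (4 * t)) ∂μ :=
        setIntegral_ge_of_const_le_real hT (measure_ne_top_of_subset hTS hS)
          (fun y hy => exp_neg_one_le_exp_neg_sq_div (by
            rw [abs_norm, norm_sub_rev, ← dist_eq_norm]; exact mem_closedBall.1 (hTx hy)))
          (hint.mono_set hTS)
    _ ≤ ∫ y in S, Real.exp (-(‖x - y‖ ^ 2) / (4 * t)) ∂μ :=
        setIntegral_mono_set hint (Filter.Eventually.of_forall fun y => (Real.exp_pos _).le)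
          hTS.eventuallyLE

end GaussianIntegral

section HeatBall

variable {E : Type*} [NormedAddCommGroup E] [NormedSpace ℝ E] [MeasurableSpace E] (μ : Measure E)

noncomputable def heatBallConst : ℝ :=
  (4 * Real.pi) ^ (-(finrank ℝ E : ℝ) / 2) * Real.exp (-1) * μ.real (ball 0 1) / 2 ^ finrank ℝ E

variable [FiniteDimensional ℝ E] [μ.IsAddHaarMeasure]

theorem heatBallConst_pos : 0 < heatBallConst μ := by
  have : 0 < μ.real (ball (0 : E) 1) :=
    ENNReal.toReal_pos (measure_ball_pos μ 0 one_pos).ne' measure_ball_lt_top.ne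
  unfold heatBallConst
  positivity

variable [BorelSpace E]

theorem measureReal_ball_of_pos (x : E) {ρ : ℝ} (hρ : 0 < ρ) :
    μ.real (ball x ρ) = ρ ^ finrank ℝ E * μ.real (ball 0 1) := by
  rw [measureReal_def, Measure.addHaar_ball_of_pos μ x hρ, ENNReal.toReal_mul,
    ENNReal.toReal_ofReal (by positivity), measureReal_def]

theorem heatBallConst_mul_le_integral {r t : ℝ} (hr : 0 < r) (ht : 0 < t) {x : E}
    (hx : ‖x‖ ≤ r + √t) :
    heatBallConst μ * (r / (r + √t)) ^ finrank ℝ E ≤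
      (4 * Real.pi * t) ^ (-(finrank ℝ E : ℝ) / 2) *
        ∫ y in ball (0 : E) r, Real.exp (-(‖x - y‖ ^ 2) / (4 * t)) ∂μ := by
  set s := √t
  have hs : 0 < s := Real.sqrt_pos.2 ht
  obtain ⟨ρ, hρ2⟩ : ∃ ρ : ℝ, 2 * ρ = min r s := ⟨min r s / 2, by ring⟩
  have hρ : 0 < ρ := by linarith [lt_min hr hs]
  obtain ⟨z, hz0, hzx⟩ := exists_ball_subset_ball_zero_and_ball hr hs.le hρ.le
    (by linarith [min_le_left r s]) hx
  have hnear : ball z ρ ⊆ closedBall x (2 * s) :=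
    hzx.trans (ball_subset_closedBall.trans (closedBall_subset_closedBall
      (by linarith [min_le_right r s])))
  have hmass := exp_neg_one_mul_measureReal_le_setIntegral μ ht.le measurableSet_ball hz0
    measure_ball_lt_top.ne hnear
  have hratio : (r / (r + s)) ^ finrank ℝ E ≤ (2 * ρ / s) ^ finrank ℝ E := by
    rw [hρ2]
    exact pow_le_pow_left₀ (by positivity) (div_add_le_min_div hr.le hs) _
  rw [measureReal_ball_of_pos μ z hρ] at hmass
  rw [mul_rpow_neg_div_two_eq_div_sqrt_pow (by positivity) ht.le]
  calc heatBallConst μ * (r / (r + s)) ^ finrank ℝ E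
      ≤ heatBallConst μ * (2 * ρ / s) ^ finrank ℝ E :=
        mul_le_mul_of_nonneg_left hratio (heatBallConst_pos μ).le
    _ = (4 * Real.pi) ^ (-(finrank ℝ E : ℝ) / 2) / s ^ finrank ℝ E *
          (Real.exp (-1) * (ρ ^ finrank ℝ E * μ.real (ball 0 1))) := by
        unfold heatBallConst; rw [div_pow, mul_pow]; field_simp
    _ ≤ _ := by gcongr

end HeatBall

theorem stmt11_general (d : ℕ) :
    ∃ c : ℝ, 0 < c ∧ c < 1 ∧
      ∀ (r t : ℝ), 0 < r → 0 < t →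
        ∀ x : EuclideanSpace ℝ (Fin d), ‖x‖ ≤ r + Real.sqrt t →
          c * (r / (r + Real.sqrt t)) ^ (d : ℝ) ≤
            (4 * Real.pi * t) ^ (-(d:ℝ) / 2) *
              ∫ y in Metric.ball (0 : EuclideanSpace ℝ (Fin d)) r,
                Real.exp (-(‖x - y‖ ^ 2) / (4 * t)) := by
  set C := heatBallConst (volume : Measure (EuclideanSpace ℝ (Fin d)))
  refine ⟨min C (1 / 2), lt_min (heatBallConst_pos _) one_half_pos,
    min_lt_of_right_lt one_half_lt_one, fun r t hr ht x hx => ?_⟩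
  have key := heatBallConst_mul_le_integral volume hr ht hx
  rw [finrank_euclideanSpace_fin] at key
  rw [Real.rpow_natCast]
  exact (mul_le_mul_of_nonneg_right (min_le_left _ _) (by positivity)).trans key

/-- whole-space version of Lemma 2.1: there is `c_d ∈ (0,1)`
such that for all `r > 0`, `t > 0` and `|x| ≤ r + √t`,
`(4πt)^{-d/2} ∫_{B(0,r)} e^{-|x−y|²/(4t)} dy ≥ c_d (r/(r+√t))^d`. -/
theorem stmt11 (d : ℕ) (hd : 1 ≤ d) :
    ∃ c : ℝ, 0 < c ∧ c < 1 ∧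
      ∀ (r t : ℝ), 0 < r → 0 < t →
        ∀ x : EuclideanSpace ℝ (Fin d), ‖x‖ ≤ r + Real.sqrt t →
          c * (r / (r + Real.sqrt t)) ^ (d : ℝ) ≤
            (4 * Real.pi * t) ^ (-(d:ℝ) / 2) *
              ∫ y in Metric.ball (0 : EuclideanSpace ℝ (Fin d)) r,
                Real.exp (-(‖x - y‖ ^ 2) / (4 * t)) :=
  stmt11_general d
end

section
/- Let d ≥ 1 and G_t denote convolution with the Gaussian heat kernel on ℝ^d. Then for all r > 0 and all 0 < t ≤ r², (G_t χ_{B(0,r)})(x) ≥ β_d for all |x| ≤ r + √t, where β_d = c_d 2^{-d} with c_d the constant of the Gaussian lower-bound lemma. -/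
open MeasureTheory

lemma half_le_div_add {r s : ℝ} (hr : 0 < r) (hs : 0 ≤ s) (hsr : s ≤ r) :
    1 / 2 ≤ r / (r + s) := by
  rw [div_le_div_iff₀ two_pos (by linarith)]
  linarith

lemma two_rpow_neg_le_div_add_rpow {r s : ℝ} (hr : 0 < r) (hs : 0 ≤ s) (hsr : s ≤ r)
    {p : ℝ} (hp : 0 ≤ p) :
    (2 : ℝ) ^ (-p) ≤ (r / (r + s)) ^ p := by
  rw [Real.rpow_neg zero_le_two, ← Real.inv_rpow zero_le_two, ← one_div]
  exact Real.rpow_le_rpow (by norm_num) (half_le_div_add hr hs hsr) hp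

theorem stmt12_general (d : ℕ) (c : ℝ) (hc0 : 0 < c)
    (hlemma : ∀ (r t : ℝ), 0 < r → 0 < t →
      ∀ x : EuclideanSpace ℝ (Fin d), ‖x‖ ≤ r + Real.sqrt t →
        c * (r / (r + Real.sqrt t)) ^ (d : ℝ) ≤
          (4 * Real.pi * t) ^ (-(d:ℝ) / 2) *
            ∫ y in Metric.ball (0 : EuclideanSpace ℝ (Fin d)) r,
              Real.exp (-(‖x - y‖ ^ 2) / (4 * t))) :
    ∀ (r t : ℝ), 0 < r → 0 < t → t ≤ r ^ 2 →
      ∀ x : EuclideanSpace ℝ (Fin d), ‖x‖ ≤ r + Real.sqrt t →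
        c * 2 ^ (-(d:ℝ)) ≤
          (4 * Real.pi * t) ^ (-(d:ℝ) / 2) *
            ∫ y in Metric.ball (0 : EuclideanSpace ℝ (Fin d)) r,
              Real.exp (-(‖x - y‖ ^ 2) / (4 * t)) := by
  intro r t hr ht htr x hx
  have hsqrt_le : Real.sqrt t ≤ r := (Real.sqrt_le_left hr.le).mpr htr
  calc c * 2 ^ (-(d:ℝ))
      ≤ c * (r / (r + Real.sqrt t)) ^ (d : ℝ) :=
        mul_le_mul_of_nonneg_left
          (two_rpow_neg_le_div_add_rpow hr (Real.sqrt_nonneg t) hsqrt_le d.cast_nonneg) hc0.le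
    _ ≤ _ := hlemma r t hr ht x hx

/-- whole-space version of Corollary 2.3: if `c_d` is a
constant for which the Gaussian lower-bound lemma holds
(`G_t χ_{B(0,r)}(x) ≥ c_d (r/(r+√t))^d` for `|x| ≤ r+√t`), then with
`β_d = c_d 2^{-d}` one has `G_t χ_{B(0,r)}(x) ≥ β_d` for all `0 < t ≤ r²`
and `|x| ≤ r + √t`. -/
theorem stmt12 (d : ℕ) (hd : 1 ≤ d) (c : ℝ) (hc0 : 0 < c) (hc1 : c < 1)
    (hlemma : ∀ (r t : ℝ), 0 < r → 0 < t →
      ∀ x : EuclideanSpace ℝ (Fin d), ‖x‖ ≤ r + Real.sqrt t →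
        c * (r / (r + Real.sqrt t)) ^ (d : ℝ) ≤
          (4 * Real.pi * t) ^ (-(d:ℝ) / 2) *
            ∫ y in Metric.ball (0 : EuclideanSpace ℝ (Fin d)) r,
              Real.exp (-(‖x - y‖ ^ 2) / (4 * t))) :
    ∀ (r t : ℝ), 0 < r → 0 < t → t ≤ r ^ 2 →
      ∀ x : EuclideanSpace ℝ (Fin d), ‖x‖ ≤ r + Real.sqrt t →
        c * 2 ^ (-(d:ℝ)) ≤
          (4 * Real.pi * t) ^ (-(d:ℝ) / 2) *
            ∫ y in Metric.ball (0 : EuclideanSpace ℝ (Fin d)) r,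
              Real.exp (-(‖x - y‖ ^ 2) / (4 * t)) :=
  stmt12_general d c hc0 hlemma
end

section
/- Let λ be the largest positive root of e^x = e² x (λ ≈ 3.15) and let p > 0. The function f(s) = s^p / (log(e+s))^β is non-decreasing on [0,∞) if and only if 0 ≤ β ≤ λ p. -/
open Real Set

/-! Since `f > 0` on `(0, ∞)`, `f'(s)` has the sign of `p / s - β / ((e + s) log (e + s))`, so `f`
is non-decreasing iff `β s ≤ p (e + s) log (e + s)` for all `s > 0`. From `log λ = λ - 2`, the
inequality `log y ≤ y - 1` at `y = e λ / (e + s)` gives `λ s ≤ (e + s) log (e + s)`, with equality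
at `s = e (λ - 1)`; so the condition is exactly `β ≤ λ p`. That `λ` is the larger root, hence
`λ > 1`, comes from a root in `[3, 4]` found by the intermediate value theorem. -/

theorem three_le_of_forall_root_le {lam : ℝ}
    (h : ∀ x : ℝ, 0 < x → exp x = exp 1 ^ 2 * x → x ≤ lam) : 3 ≤ lam := by
  have he3 : exp 1 < 3 := by linarith [exp_one_lt_d9]
  have he2 : 2 < exp 1 := by linarith [exp_one_gt_d9]
  have hcont : ContinuousOn (fun x ↦ exp x - exp 1 ^ 2 * x) (Icc 3 4) := by fun_prop
  have h3 : exp 3 - exp 1 ^ 2 * 3 ≤ 0 := by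
    rw [show exp 3 = exp 1 ^ 3 by rw [exp_one_pow]; norm_num]; nlinarith [sq_nonneg (exp 1)]
  have h4 : 0 ≤ exp 4 - exp 1 ^ 2 * 4 := by
    have he4 : 4 < exp 1 ^ 2 := by nlinarith
    rw [show exp 4 = exp 1 ^ 4 by rw [exp_one_pow]; norm_num]
    nlinarith [mul_le_mul_of_nonneg_left he4.le (sq_nonneg (exp 1))]
  obtain ⟨x, ⟨hx3, -⟩, hx⟩ := intermediate_value_Icc (by norm_num) hcont ⟨h3, h4⟩
  exact hx3.trans (h x (by linarith) (by linarith [show exp x - exp 1 ^ 2 * x = 0 from hx]))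

theorem log_eq_sub_two_of_exp_eq {x : ℝ} (hx : 0 < x) (h : exp x = exp 1 ^ 2 * x) :
    log x = x - 2 := by
  have := congrArg log h
  rw [log_exp, log_mul (by positivity) hx.ne', log_pow, log_exp] at this
  push_cast at this
  linarith

theorem mul_le_add_mul_log_add {lam : ℝ} (hlam : 0 < lam) (hlog : log lam = lam - 2) {s : ℝ}
    (hs : 0 ≤ s) : lam * s ≤ (exp 1 + s) * log (exp 1 + s) := by
  have hes : 0 < exp 1 + s := by positivity
  have h := log_le_sub_one_of_pos (show 0 < exp 1 * lam / (exp 1 + s) by positivity)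
  rw [log_div (by positivity) hes.ne', log_mul (exp_pos 1).ne' hlam.ne', log_exp, hlog,
    le_sub_iff_add_le, le_div_iff₀ hes] at h
  nlinarith

theorem add_mul_log_add_eq {lam : ℝ} (hlam : 0 < lam) (hlog : log lam = lam - 2) :
    (exp 1 + exp 1 * (lam - 1)) * log (exp 1 + exp 1 * (lam - 1)) =
      lam * (exp 1 * (lam - 1)) := by
  rw [show exp 1 + exp 1 * (lam - 1) = exp 1 * lam by ring, log_mul (exp_pos 1).ne' hlam.ne',
    log_exp, hlog]
  ring

theorem forall_mul_le_add_mul_log_add_iff {lam p β : ℝ} (hlam : 1 < lam)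
    (hlog : log lam = lam - 2) (hp : 0 ≤ p) :
    (∀ s, 0 < s → β * s ≤ p * ((exp 1 + s) * log (exp 1 + s))) ↔ β ≤ lam * p := by
  constructor
  · intro h
    have hs₀ : 0 < exp 1 * (lam - 1) := mul_pos (exp_pos 1) (by linarith)
    have := h _ hs₀
    rw [add_mul_log_add_eq (by linarith) hlog] at this
    nlinarith
  · intro h s hs
    calc β * s ≤ lam * p * s := by gcongr
      _ = p * (lam * s) := by ring
      _ ≤ p * ((exp 1 + s) * log (exp 1 + s)) :=
        mul_le_mul_of_nonneg_left (mul_le_add_mul_log_add (by linarith) hlog hs.le) hp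

theorem one_le_log_exp_one_add {s : ℝ} (hs : 0 ≤ s) : 1 ≤ log (exp 1 + s) := by
  calc 1 = log (exp 1) := (log_exp 1).symm
    _ ≤ log (exp 1 + s) := log_le_log (exp_pos 1) (by linarith)

theorem hasDerivAt_rpow_div_log_rpow (p β : ℝ) {s : ℝ} (hs : 0 < s) :
    HasDerivAt (fun x ↦ x ^ p / log (exp 1 + x) ^ β)
      (s ^ p / log (exp 1 + s) ^ β * (p / s - β / ((exp 1 + s) * log (exp 1 + s)))) s := by
  have hes : 0 < exp 1 + s := by positivity
  have hL : 0 < log (exp 1 + s) := by linarith [one_le_log_exp_one_add hs.le]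
  have hlog : HasDerivAt (fun x ↦ log (exp 1 + x)) (exp 1 + s)⁻¹ s := by
    simpa using ((hasDerivAt_id s).const_add (exp 1)).log hes.ne'
  refine ((hasDerivAt_rpow_const (p := p) (Or.inl hs.ne')).div
    (hlog.rpow_const (p := β) (Or.inl hL.ne')) (by positivity)).congr_deriv ?_
  rw [rpow_sub_one hs.ne', rpow_sub_one hL.ne']
  field_simp

theorem continuousOn_rpow_div_log_rpow {p : ℝ} (hp : 0 ≤ p) (β : ℝ) :
    ContinuousOn (fun x ↦ x ^ p / log (exp 1 + x) ^ β) (Ici 0) := by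
  intro s (hs : 0 ≤ s)
  have hL : 0 < log (exp 1 + s) := by linarith [one_le_log_exp_one_add hs]
  have hlog : ContinuousAt (fun x ↦ log (exp 1 + x)) s :=
    (continuousAt_log (by positivity)).comp (by fun_prop)
  exact ((continuousAt_rpow_const s p (Or.inr hp)).div (hlog.rpow_const (Or.inl hL.ne'))
    (rpow_pos_of_pos hL β).ne').continuousWithinAt

theorem deriv_rpow_div_log_rpow_nonneg_iff {p β s : ℝ} (hs : 0 < s) :
    0 ≤ deriv (fun x ↦ x ^ p / log (exp 1 + x) ^ β) s ↔
      β * s ≤ p * ((exp 1 + s) * log (exp 1 + s)) := by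
  have hL : 0 < log (exp 1 + s) := by linarith [one_le_log_exp_one_add hs.le]
  rw [(hasDerivAt_rpow_div_log_rpow p β hs).deriv, mul_nonneg_iff_of_pos_left (by positivity),
    sub_nonneg, div_le_div_iff₀ (by positivity) hs]

theorem monotoneOn_rpow_div_log_rpow_iff {p : ℝ} (hp : 0 ≤ p) (β : ℝ) :
    MonotoneOn (fun x ↦ x ^ p / log (exp 1 + x) ^ β) (Ici 0) ↔
      ∀ s, 0 < s → β * s ≤ p * ((exp 1 + s) * log (exp 1 + s)) := by
  constructor
  · intro hmono s hs
    rw [← deriv_rpow_div_log_rpow_nonneg_iff hs, ← derivWithin_of_mem_nhds (Ici_mem_nhds hs)]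
    exact hmono.derivWithin_nonneg
  · intro h
    refine monotoneOn_of_deriv_nonneg (convex_Ici 0) (continuousOn_rpow_div_log_rpow hp β)
      ?_ ?_ <;> rw [interior_Ici] <;> intro s hs
    · exact (hasDerivAt_rpow_div_log_rpow p β hs).differentiableAt.differentiableWithinAt
    · exact (deriv_rpow_div_log_rpow_nonneg_iff hs).2 (h s hs)

theorem stmt19_general (lam : ℝ)
    (hlam_root : exp lam = exp 1 ^ 2 * lam)
    (hlam_max : ∀ x : ℝ, 0 < x → exp x = exp 1 ^ 2 * x → x ≤ lam)
    (p β : ℝ) (hp : 0 < p)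
    (f : ℝ → ℝ) (hf : ∀ s, f s = s ^ p / (log (exp 1 + s)) ^ β) :
    MonotoneOn f (Set.Ici 0) ↔ β ≤ lam * p := by
  have hlam : 3 ≤ lam := three_le_of_forall_root_le hlam_max
  rw [show f = _ from funext hf, monotoneOn_rpow_div_log_rpow_iff hp.le,
    forall_mul_le_add_mul_log_add_iff (by linarith)
      (log_eq_sub_two_of_exp_eq (by linarith) hlam_root) hp.le]

/-- let `λ` be the largest positive root of `e^x = e² x`
(so `λ ≈ 3.15`) and `p > 0`. The function `f(s) = s^p / (log(e+s))^β`
(`β ≥ 0`) is non-decreasing on `[0,∞)` if and only if `β ≤ λ p`. -/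
theorem stmt19 (lam : ℝ) (hlam_pos : 0 < lam)
    (hlam_root : exp lam = exp 1 ^ 2 * lam)
    (hlam_max : ∀ x : ℝ, 0 < x → exp x = exp 1 ^ 2 * x → x ≤ lam)
    (p β : ℝ) (hp : 0 < p) (hβ : 0 ≤ β)
    (f : ℝ → ℝ) (hf : ∀ s, f s = s ^ p / (log (exp 1 + s)) ^ β) :
    MonotoneOn f (Set.Ici 0) ↔ β ≤ lam * p :=
  stmt19_general lam hlam_root hlam_max p β hp f hf
end
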